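/- arXiv:2312.11066 — 3 statements merged into one kernel-verified Lean document; each statement's English description precedes it below -/
import Mathlib

section
/- If Ω is a Hermitian operator on a finite-dimensional Hilbert space with 0 ≤ Ω ≤ I and Ω|ψ⟩ = |ψ⟩ for a unit vector ψ, then for any density operator σ with ⟨ψ|σ|ψ⟩ ≤ 1-ε (0 ≤ ε ≤ 1), tr[Ωσ] ≤ 1 - (1 - λ₂(Ω))ε, where λ₂(Ω) is the largest eigenvalue of (I - |ψ⟩⟨ψ|)Ω(I - |ψ⟩⟨ψ|) restricted to the orthogonal complement of ψ. Moreover, this bound is attained. -/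
open Matrix
open scoped ComplexOrder

/-!
Write a vector as `w = α • ψ + y` with `y ⊥ ψ`. Since `Ω` is Hermitian and fixes `ψ`, the cross
terms vanish and `⟨w|Ω|w⟩ = |α|² + ⟨y|Ω|y⟩ ≤ |α|² + λ₂ ‖y‖²`; that is,
`Ω ≤ λ₂ I + (1 - λ₂) |ψ⟩⟨ψ|` as quadratic forms. Pairing with a density operator `σ` (a sum of
rank-one positive matrices) gives `tr[Ωσ] ≤ λ₂ + (1 - λ₂) ⟨ψ|σ|ψ⟩ ≤ 1 - (1 - λ₂) ε`, using
`λ₂ ≤ 1` (from `Ω ≤ I`). Equality holds for `σ = (1 - ε) |ψ⟩⟨ψ| + ε |v⟩⟨v|` with `v` a unit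
vector orthogonal to `ψ` attaining `λ₂`.
-/

namespace Matrix

variable {n 𝕜 : Type*} [Fintype n] [RCLike 𝕜]

lemma trace_mul_vecMulVec_self_star (A : Matrix n n 𝕜) (v : n → 𝕜) :
    trace (A * vecMulVec v (star v)) = star v ⬝ᵥ A *ᵥ v := by
  rw [mul_vecMulVec, trace_vecMulVec, dotProduct_comm]

lemma star_dotProduct_vecMulVec_mulVec (a x : n → 𝕜) :
    star x ⬝ᵥ vecMulVec a (star a) *ᵥ x = (star x ⬝ᵥ a) * (star a ⬝ᵥ x) := by
  rw [vecMulVec_mulVec]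
  simp [dotProduct_smul, mul_comm]

lemma PosSemidef.re_trace_mul_le_re_trace_mul {A B σ : Matrix n n 𝕜} (hσ : σ.PosSemidef)
    (hAB : ∀ v, RCLike.re (star v ⬝ᵥ A *ᵥ v) ≤ RCLike.re (star v ⬝ᵥ B *ᵥ v)) :
    RCLike.re (trace (A * σ)) ≤ RCLike.re (trace (B * σ)) := by
  obtain ⟨k, v, rfl⟩ := posSemidef_iff_eq_sum_vecMulVec.mp hσ
  simp only [Matrix.mul_sum, trace_sum, trace_mul_vecMulVec_self_star, map_sum]
  exact Finset.sum_le_sum fun i _ ↦ hAB (v i)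

lemma re_star_dotProduct_mulVec_le_of_posSemidef_one_sub [DecidableEq n] {A : Matrix n n 𝕜}
    (hA : (1 - A).PosSemidef) (v : n → 𝕜) :
    RCLike.re (star v ⬝ᵥ A *ᵥ v) ≤ RCLike.re (star v ⬝ᵥ v) := by
  have := hA.re_dotProduct_nonneg v
  rwa [sub_mulVec, one_mulVec, dotProduct_sub, map_sub, sub_nonneg] at this

lemma IsHermitian.star_dotProduct_mulVec_smul_add {A : Matrix n n 𝕜} (hA : A.IsHermitian)
    {ψ y : n → 𝕜} {μ : 𝕜} (hψ : A *ᵥ ψ = μ • ψ) (hy : star ψ ⬝ᵥ y = 0) (c : 𝕜) :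
    star (c • ψ + y) ⬝ᵥ A *ᵥ (c • ψ + y) =
      μ * (star c * c) * (star ψ ⬝ᵥ ψ) + star y ⬝ᵥ A *ᵥ y := by
  have hyψ : star y ⬝ᵥ ψ = 0 := by rw [star_dotProduct, hy, star_zero]
  have hψAy : star ψ ⬝ᵥ A *ᵥ y = 0 := by
    rw [dotProduct_mulVec, ← hA.eq, ← star_mulVec, hψ, star_smul, smul_dotProduct, hy, smul_zero]
  simp only [star_add, star_smul, mulVec_add, mulVec_smul, hψ, add_dotProduct, dotProduct_add,
    smul_dotProduct, dotProduct_smul, hyψ, hψAy, smul_eq_mul]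
  ring

lemma re_star_dotProduct_mulVec_le_of_orthogonal {A : Matrix n n 𝕜} {ψ : n → 𝕜} {l : ℝ}
    (hl : ∀ v, star v ⬝ᵥ v = 1 → star ψ ⬝ᵥ v = 0 → RCLike.re (star v ⬝ᵥ A *ᵥ v) ≤ l)
    {y : n → 𝕜} (hy : star ψ ⬝ᵥ y = 0) :
    RCLike.re (star y ⬝ᵥ A *ᵥ y) ≤ l * RCLike.re (star y ⬝ᵥ y) := by
  rcases eq_or_ne y 0 with rfl | hy0
  · simp
  obtain ⟨r, -, hyy⟩ := RCLike.nonneg_iff_exists_ofReal.mp (dotProduct_star_self_nonneg y)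
  have hr : 0 < r := RCLike.ofReal_pos.mp (hyy ▸ dotProduct_star_self_pos_iff.mpr hy0)
  rw [← hyy, RCLike.ofReal_re]
  set c : ℝ := (√r)⁻¹
  have hcr : c * c * r = 1 := by
    simp only [c, ← mul_inv, Real.mul_self_sqrt hr.le, inv_mul_cancel₀ hr.ne']
  have hu := hl (c • y) (by
      rw [star_smul, star_trivial, smul_dotProduct, dotProduct_smul, smul_smul, ← hyy,
        RCLike.real_smul_eq_coe_mul]
      exact_mod_cast hcr)
    (by rw [dotProduct_smul, hy, smul_zero])
  rw [star_smul, star_trivial, mulVec_smul, smul_dotProduct, dotProduct_smul, smul_smul,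
    RCLike.smul_re] at hu
  calc RCLike.re (star y ⬝ᵥ A *ᵥ y) = r * (c * c * RCLike.re (star y ⬝ᵥ A *ᵥ y)) := by
        rw [← mul_assoc, mul_comm r, hcr, one_mul]
    _ ≤ r * l := mul_le_mul_of_nonneg_left hu hr.le
    _ = l * r := mul_comm _ _

lemma IsHermitian.re_star_dotProduct_mulVec_le {A : Matrix n n 𝕜} (hA : A.IsHermitian)
    {ψ : n → 𝕜} (hψ : star ψ ⬝ᵥ ψ = 1) (hAψ : A *ᵥ ψ = ψ) {l : ℝ}
    (hl : ∀ v, star v ⬝ᵥ v = 1 → star ψ ⬝ᵥ v = 0 → RCLike.re (star v ⬝ᵥ A *ᵥ v) ≤ l)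
    (w : n → 𝕜) :
    RCLike.re (star w ⬝ᵥ A *ᵥ w) ≤
      l * RCLike.re (star w ⬝ᵥ w) + (1 - l) * ‖star ψ ⬝ᵥ w‖ ^ 2 := by
  classical
  set α := star ψ ⬝ᵥ w
  set y := w - α • ψ
  have hy : star ψ ⬝ᵥ y = 0 := by
    rw [dotProduct_sub, dotProduct_smul, hψ, smul_eq_mul, mul_one, sub_self]
  have hw : w = α • ψ + y := by simp [y]
  have hsplit := hA.star_dotProduct_mulVec_smul_add (hAψ.trans (one_smul 𝕜 ψ).symm) hy α
  have hnorm := isHermitian_one.star_dotProduct_mulVec_smul_add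
    ((one_mulVec ψ).trans (one_smul 𝕜 ψ).symm) hy α
  rw [← hw] at hsplit hnorm
  simp only [one_mulVec, hψ, one_mul, mul_one, RCLike.star_def, RCLike.conj_mul] at hsplit hnorm
  have hy_le := re_star_dotProduct_mulVec_le_of_orthogonal hl hy
  rw [hsplit, hnorm]
  simp only [map_add, ← RCLike.ofReal_pow, RCLike.ofReal_re] at hy_le ⊢
  linarith

lemma IsHermitian.re_trace_mul_le {A : Matrix n n 𝕜} (hA : A.IsHermitian)
    {ψ : n → 𝕜} (hψ : star ψ ⬝ᵥ ψ = 1) (hAψ : A *ᵥ ψ = ψ) {l : ℝ}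
    (hl : ∀ v, star v ⬝ᵥ v = 1 → star ψ ⬝ᵥ v = 0 → RCLike.re (star v ⬝ᵥ A *ᵥ v) ≤ l)
    {σ : Matrix n n 𝕜} (hσ : σ.PosSemidef) :
    RCLike.re (trace (A * σ)) ≤
      l * RCLike.re (trace σ) + (1 - l) * RCLike.re (star ψ ⬝ᵥ σ *ᵥ ψ) := by
  classical
  set B : Matrix n n 𝕜 := l • 1 + (1 - l) • vecMulVec ψ (star ψ)
  have hB (w : n → 𝕜) : RCLike.re (star w ⬝ᵥ B *ᵥ w) =
      l * RCLike.re (star w ⬝ᵥ w) + (1 - l) * ‖star ψ ⬝ᵥ w‖ ^ 2 := by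
    rw [add_mulVec, smul_mulVec, smul_mulVec, one_mulVec, dotProduct_add, dotProduct_smul,
      dotProduct_smul, star_dotProduct_vecMulVec_mulVec, star_dotProduct w ψ, RCLike.star_def,
      RCLike.conj_mul, map_add, RCLike.smul_re, RCLike.smul_re, ← RCLike.ofReal_pow,
      RCLike.ofReal_re]
  calc RCLike.re (trace (A * σ)) ≤ RCLike.re (trace (B * σ)) :=
        hσ.re_trace_mul_le_re_trace_mul fun w ↦
          (hB w).symm ▸ hA.re_star_dotProduct_mulVec_le hψ hAψ hl w
    _ = l * RCLike.re (trace σ) + (1 - l) * RCLike.re (star ψ ⬝ᵥ σ *ᵥ ψ) := by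
      rw [Matrix.add_mul, smul_mul, smul_mul, Matrix.one_mul, trace_add, trace_smul, trace_smul,
        trace_mul_comm, trace_mul_vecMulVec_self_star, map_add, RCLike.smul_re, RCLike.smul_re]

end Matrix

theorem single_copy_passing_prob_bound_general {m : ℕ}
    (ψ : Fin m → ℂ) (hψ : star ψ ⬝ᵥ ψ = 1)
    (Ω : Matrix (Fin m) (Fin m) ℂ)
    (hherm : Ω.IsHermitian) (hle : (1 - Ω).PosSemidef)
    (hfix : Ω *ᵥ ψ = ψ)
    (l : ℝ)
    (hl : IsGreatest {x : ℝ | ∃ v : Fin m → ℂ, star v ⬝ᵥ v = 1 ∧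
        star ψ ⬝ᵥ v = 0 ∧ x = (star v ⬝ᵥ Ω *ᵥ v).re} l)
    (ε : ℝ) (hε0 : 0 ≤ ε) (hε1 : ε ≤ 1) :
    (∀ σ : Matrix (Fin m) (Fin m) ℂ, σ.PosSemidef → σ.trace = 1 →
        (star ψ ⬝ᵥ σ *ᵥ ψ).re ≤ 1 - ε → (Matrix.trace (Ω * σ)).re ≤ 1 - (1 - l) * ε) ∧
    (∃ σ : Matrix (Fin m) (Fin m) ℂ, σ.PosSemidef ∧ σ.trace = 1 ∧
        (star ψ ⬝ᵥ σ *ᵥ ψ).re ≤ 1 - ε ∧ (Matrix.trace (Ω * σ)).re = 1 - (1 - l) * ε) := by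
  obtain ⟨v, hv, hvψ, hvl⟩ := hl.1
  have hbound (w : Fin m → ℂ) (hw : star w ⬝ᵥ w = 1) (hwψ : star ψ ⬝ᵥ w = 0) :
      RCLike.re (star w ⬝ᵥ Ω *ᵥ w) ≤ l := hl.2 ⟨w, hw, hwψ, rfl⟩
  have hl1 : l ≤ 1 := by
    simpa [hvl, hv] using re_star_dotProduct_mulVec_le_of_posSemidef_one_sub hle v
  refine ⟨fun σ hσ htr hψσ ↦ ?_, ?_⟩
  · have := hherm.re_trace_mul_le hψ hfix hbound hσ
    simp only [htr, RCLike.re_to_complex, Complex.one_re, mul_one] at this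
    linarith [mul_le_mul_of_nonneg_left hψσ (sub_nonneg.2 hl1)]
  refine ⟨(1 - ε) • vecMulVec ψ (star ψ) + ε • vecMulVec v (star v),
    ((posSemidef_vecMulVec_self_star ψ).smul (sub_nonneg.2 hε1)).add
      ((posSemidef_vecMulVec_self_star v).smul hε0), ?_, ?_, ?_⟩
  · rw [trace_add, trace_smul, trace_smul, trace_vecMulVec, trace_vecMulVec, dotProduct_comm,
      hψ, dotProduct_comm, hv]
    simp
  · rw [add_mulVec, smul_mulVec, smul_mulVec, dotProduct_add, dotProduct_smul, dotProduct_smul,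
      star_dotProduct_vecMulVec_mulVec, star_dotProduct_vecMulVec_mulVec, hψ, hvψ]
    simp
  · rw [Matrix.mul_add, Matrix.mul_smul, Matrix.mul_smul, trace_add, trace_smul, trace_smul,
      trace_mul_vecMulVec_self_star, trace_mul_vecMulVec_self_star, hfix, hψ, Complex.add_re,
      Complex.smul_re, Complex.smul_re, ← hvl, Complex.one_re]
    ring

/-- If `Ω` is Hermitian with `0 ≤ Ω ≤ I` and `Ω|ψ⟩ = |ψ⟩` for a unit
vector `ψ`, and `l = λ₂(Ω)` is the largest value of `⟨v|Ω|v⟩` over unit vectors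
`v` orthogonal to `ψ` (the largest eigenvalue of `(I-|ψ⟩⟨ψ|)Ω(I-|ψ⟩⟨ψ|)` on the
orthogonal complement of `ψ`), then every density operator `σ` with
`⟨ψ|σ|ψ⟩ ≤ 1-ε` satisfies `tr[Ωσ] ≤ 1 - (1 - λ₂(Ω))ε`, and the bound is attained. -/
theorem single_copy_passing_prob_bound {m : ℕ}
    (ψ : Fin m → ℂ) (hψ : star ψ ⬝ᵥ ψ = 1)
    (Ω : Matrix (Fin m) (Fin m) ℂ)
    (hherm : Ω.IsHermitian) (hpos : Ω.PosSemidef) (hle : (1 - Ω).PosSemidef)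
    (hfix : Ω *ᵥ ψ = ψ)
    (l : ℝ)
    (hl : IsGreatest {x : ℝ | ∃ v : Fin m → ℂ, star v ⬝ᵥ v = 1 ∧
        star ψ ⬝ᵥ v = 0 ∧ x = (star v ⬝ᵥ Ω *ᵥ v).re} l)
    (ε : ℝ) (hε0 : 0 ≤ ε) (hε1 : ε ≤ 1) :
    (∀ σ : Matrix (Fin m) (Fin m) ℂ, σ.PosSemidef → σ.trace = 1 →
        (star ψ ⬝ᵥ σ *ᵥ ψ).re ≤ 1 - ε → (Matrix.trace (Ω * σ)).re ≤ 1 - (1 - l) * ε) ∧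
    (∃ σ : Matrix (Fin m) (Fin m) ℂ, σ.PosSemidef ∧ σ.trace = 1 ∧
        (star ψ ⬝ᵥ σ *ᵥ ψ).re ≤ 1 - ε ∧ (Matrix.trace (Ω * σ)).re = 1 - (1 - l) * ε) :=
  single_copy_passing_prob_bound_general ψ hψ Ω hherm hle hfix l hl ε hε0 hε1
end

section
/- Let Ω_l be a Hermitian operator with 0 ≤ Ω_l ≤ I and Ω_l|ψ⟩ = |ψ⟩, and let Ω = Ω_l ⊗ Ω_l. Define P_ψ = |ψ⟩⟨ψ| ⊗ (I - |ψ⟩⟨ψ|) and P_s = (F+I)/2 where F is the swap. Then the operator Ω_⋆ = 2 P_ψ P_s Ω P_s P_ψ equals |ψ⟩⟨ψ| ⊗ [(I-|ψ⟩⟨ψ|) Ω_l (I-|ψ⟩⟨ψ|)], and hence the largest eigenvalue of Ω_⋆ equals the largest eigenvalue of (I-|ψ⟩⟨ψ|)Ω_l(I-|ψ⟩⟨ψ|). -/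
open Matrix
open scoped ComplexOrder Kronecker


lemma algmap_mulVec {n : Type*} [Fintype n] [DecidableEq n] (μ : ℂ) (v : n → ℂ) :
    (algebraMap ℂ (Matrix n n ℂ)) μ *ᵥ v = μ • v := by
  rw [Algebra.algebraMap_eq_smul_one, Matrix.smul_mulVec, Matrix.one_mulVec]

lemma spec_iff {n : Type*} [Fintype n] [DecidableEq n] (M : Matrix n n ℂ) (μ : ℂ) :
    μ ∈ spectrum ℂ M ↔ ∃ v, v ≠ 0 ∧ M *ᵥ v = μ • v := by
  rw [spectrum.mem_iff, Matrix.isUnit_iff_isUnit_det, isUnit_iff_ne_zero, not_ne_iff,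
    ← Matrix.exists_mulVec_eq_zero_iff]
  constructor
  · rintro ⟨v, hv, hv2⟩
    refine ⟨v, hv, ?_⟩
    rw [Matrix.sub_mulVec, sub_eq_zero, algmap_mulVec] at hv2
    exact hv2.symm
  · rintro ⟨v, hv, hv2⟩
    exact ⟨v, hv, by rw [Matrix.sub_mulVec, sub_eq_zero, algmap_mulVec, hv2]⟩

lemma kron_mulVec {m : ℕ} (A B : Matrix (Fin m) (Fin m) ℂ) (x y : Fin m → ℂ) :
    (A ⊗ₖ B) *ᵥ (fun p => x p.1 * y p.2) = fun p => (A *ᵥ x) p.1 * (B *ᵥ y) p.2 := by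
  funext p
  simp only [Matrix.mulVec, dotProduct, Fintype.sum_prod_type, kroneckerMap_apply]
  rw [Finset.sum_mul_sum]
  exact Finset.sum_congr rfl fun i _ => Finset.sum_congr rfl fun j _ => by ring

lemma spec_kron {m : ℕ} (ψ : Fin m → ℂ) (hψ : star ψ ⬝ᵥ ψ = 1)
    (M : Matrix (Fin m) (Fin m) ℂ) (hMψ : M *ᵥ ψ = 0) :
    {r : ℝ | (r : ℂ) ∈ spectrum ℂ (vecMulVec ψ (star ψ) ⊗ₖ M)}
      = {r : ℝ | (r : ℂ) ∈ spectrum ℂ M} := by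
  have hψne : ψ ≠ 0 := by
    rintro rfl
    simp [dotProduct] at hψ
  have hPψ : vecMulVec ψ (star ψ) *ᵥ ψ = ψ := by
    funext i
    have : (vecMulVec ψ (star ψ) *ᵥ ψ) i = ψ i * (star ψ ⬝ᵥ ψ) := by
      simp only [Matrix.mulVec, dotProduct, vecMulVec_apply, Finset.mul_sum]
      exact Finset.sum_congr rfl fun k _ => by ring
    rw [this, hψ, mul_one]
  have h0 : (0 : ℂ) ∈ spectrum ℂ M := by
    rw [spec_iff]
    exact ⟨ψ, hψne, by rw [hMψ, zero_smul]⟩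
  ext r
  simp only [Set.mem_setOf_eq]
  constructor
  · intro hr
    rw [spec_iff] at hr
    obtain ⟨w, hw, heig⟩ := hr
    rcases eq_or_ne (r : ℂ) 0 with h | h
    · rw [h]; exact h0
    · set u : Fin m → ℂ := fun j => ∑ i, star ψ i * w (i, j) with hu
      have claim : ∀ a b, ((vecMulVec ψ (star ψ) ⊗ₖ M) *ᵥ w) (a, b) = ψ a * (M *ᵥ u) b := by
        intro a b
        simp only [Matrix.mulVec, dotProduct, Fintype.sum_prod_type,
          kroneckerMap_apply, vecMulVec_apply, hu]
        rw [Finset.mul_sum, Finset.sum_comm]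
        refine Finset.sum_congr rfl fun j _ => ?_
        simp only [Finset.mul_sum]
        exact Finset.sum_congr rfl fun i _ => by ring
      have heig' : ∀ a b, ψ a * (M *ᵥ u) b = (r : ℂ) * w (a, b) := by
        intro a b
        rw [← claim a b, heig]
        rfl
      have hMu : M *ᵥ u = (r : ℂ) • u := by
        funext j
        have : (r : ℂ) * u j = (M *ᵥ u) j * (star ψ ⬝ᵥ ψ) := by
          simp only [hu, dotProduct, Finset.mul_sum]
          exact Finset.sum_congr rfl fun i _ => by
            rw [← mul_assoc, mul_comm ((r:ℂ)) (star ψ i), mul_assoc, ← heig' i j]; ring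
        rw [hψ, mul_one] at this
        simp [this.symm]
      have hune : u ≠ 0 := by
        intro h0u
        apply hw
        funext p
        have := heig' p.1 p.2
        rw [h0u, Matrix.mulVec_zero] at this
        simp only [Pi.zero_apply, mul_zero] at this
        rcases mul_eq_zero.1 this.symm with h1 | h1
        · exact absurd h1 h
        · exact h1
      exact (spec_iff M r).2 ⟨u, hune, hMu⟩
  · intro hr
    rw [spec_iff] at hr ⊢
    obtain ⟨v, hv, heig⟩ := hr
    refine ⟨fun p => ψ p.1 * v p.2, ?_, ?_⟩
    · obtain ⟨i, hi⟩ := Function.ne_iff.1 hψne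
      obtain ⟨j, hj⟩ := Function.ne_iff.1 hv
      intro h0w
      exact hi ((mul_eq_zero.1 (by simpa using congrFun h0w (i, j))).resolve_right hj)
    · rw [kron_mulVec, hPψ, heig]
      funext p
      simp [mul_comm, mul_assoc, mul_left_comm]


section
variable {m : ℕ} (F : Matrix (Fin m × Fin m) (Fin m × Fin m) ℂ)
  (hF : ∀ x y : Fin m → ℂ,
      F *ᵥ (fun p => x p.1 * y p.2) = fun p => y p.1 * x p.2)

include hF in
lemma Fentry (a b i j : Fin m) :
    F (a, b) (i, j) = (if a = j then 1 else 0) * (if b = i then 1 else 0) := by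
  have := congrFun (hF (Pi.single i 1) (Pi.single j 1)) (a, b)
  simp only [Matrix.mulVec, dotProduct, Fintype.sum_prod_type, Pi.single_apply] at this
  simpa [mul_ite, ite_mul, Finset.sum_ite_eq, Finset.sum_ite_eq'] using this

include hF in
lemma F_mul_kron (A B : Matrix (Fin m) (Fin m) ℂ) :
    F * (A ⊗ₖ B) = (B ⊗ₖ A) * F := by
  ext ⟨a, b⟩ ⟨c, d⟩
  simp only [Matrix.mul_apply, Fintype.sum_prod_type, kroneckerMap_apply, Fentry F hF]
  simp [mul_ite, ite_mul, Finset.sum_ite_eq, Finset.sum_ite_eq', mul_comm]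

include hF in
lemma F_mul_F : F * F = 1 := by
  ext ⟨a, b⟩ ⟨c, d⟩
  simp only [Matrix.mul_apply, Fintype.sum_prod_type, Fentry F hF]
  simp [mul_ite, ite_mul, Finset.sum_ite_eq, Finset.sum_ite_eq', Matrix.one_apply,
    Prod.ext_iff, and_comm, eq_comm, ite_and]
  split <;> split <;> simp_all

variable (ψ : Fin m → ℂ) (hψ : star ψ ⬝ᵥ ψ = 1)
  (Ωl : Matrix (Fin m) (Fin m) ℂ) (hherm : Ωl.IsHermitian) (hfix : Ωl *ᵥ ψ = ψ)

include hherm hfix in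
lemma P_mul_omega : vecMulVec ψ (star ψ) * Ωl = vecMulVec ψ (star ψ) := by
  have h : star ψ ᵥ* Ωl = star ψ := by
    conv_lhs => rw [← hherm.eq]
    rw [← Matrix.star_mulVec, hfix]
  ext i j
  simp only [Matrix.mul_apply, vecMulVec_apply, mul_assoc, ← Finset.mul_sum]
  rw [show ∑ k, star ψ k * Ωl k j = (star ψ ᵥ* Ωl) j from rfl, h]

include hψ in
lemma P_idem : vecMulVec ψ (star ψ) * vecMulVec ψ (star ψ) = vecMulVec ψ (star ψ) := by
  ext i j
  simp only [Matrix.mul_apply, vecMulVec_apply]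
  calc ∑ k, ψ i * star ψ k * (ψ k * star ψ j)
      = (ψ i * star ψ j) * ∑ k, star ψ k * ψ k := by
        rw [Finset.mul_sum]; exact Finset.sum_congr rfl fun k _ => by ring
    _ = ψ i * star ψ j := by
        rw [show ∑ k, star ψ k * ψ k = star ψ ⬝ᵥ ψ from rfl, hψ, mul_one]

include hF hψ hherm hfix in
lemma main_eq :
    (2 : ℂ) • ((vecMulVec ψ (star ψ) ⊗ₖ (1 - vecMulVec ψ (star ψ))) *
        ((2⁻¹ : ℂ) • (F + 1)) * (Ωl ⊗ₖ Ωl) * ((2⁻¹ : ℂ) • (F + 1)) *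
        (vecMulVec ψ (star ψ) ⊗ₖ (1 - vecMulVec ψ (star ψ))))
      = vecMulVec ψ (star ψ) ⊗ₖ
          ((1 - vecMulVec ψ (star ψ)) * Ωl * (1 - vecMulVec ψ (star ψ))) := by
  set P : Matrix (Fin m) (Fin m) ℂ := vecMulVec ψ (star ψ) with hP
  set Q : Matrix (Fin m) (Fin m) ℂ := 1 - P with hQ
  have hPΩ : P * Ωl = P := P_mul_omega ψ Ωl hherm hfix
  have hPP : P * P = P := P_idem ψ hψ
  have hPQ : P * Q = 0 := by rw [hQ, mul_sub, mul_one, hPP, sub_self]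
  have hkron : ∀ A B C D : Matrix (Fin m) (Fin m) ℂ,
      (A ⊗ₖ B) * (C ⊗ₖ D) = (A * C) ⊗ₖ (B * D) := fun A B C D =>
    (Matrix.mul_kronecker_mul A C B D).symm
  have hFK : ∀ A B : Matrix (Fin m) (Fin m) ℂ, F * (A ⊗ₖ B) = (B ⊗ₖ A) * F :=
    F_mul_kron F hF
  have hFF : F * F = 1 := F_mul_F F hF
  have hPΩQ : P * (Ωl * Q) = 0 := by rw [← mul_assoc, hPΩ, hPQ]
  have hPΩP : P * (Ωl * P) = P := by rw [← mul_assoc, hPΩ, hPP]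
  have h1 : (P ⊗ₖ Q) * (F * ((Ωl ⊗ₖ Ωl) * (F * (P ⊗ₖ Q)))) = P ⊗ₖ (Q * Ωl * Q) := by
    rw [hFK P Q, ← mul_assoc (Ωl ⊗ₖ Ωl), hkron, ← mul_assoc F, hFK, mul_assoc, hFF,
      mul_one, hkron, hPΩP, ← mul_assoc Q]
  have h2 : (P ⊗ₖ Q) * (F * ((Ωl ⊗ₖ Ωl) * (P ⊗ₖ Q))) = 0 := by
    rw [hkron, hFK, ← mul_assoc, hkron, hPΩQ, Matrix.zero_kronecker, zero_mul]
  have h3 : (P ⊗ₖ Q) * ((Ωl ⊗ₖ Ωl) * (F * (P ⊗ₖ Q))) = 0 := by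
    rw [hFK P Q, ← mul_assoc (Ωl ⊗ₖ Ωl), hkron, ← mul_assoc, hkron, hPΩQ,
      Matrix.zero_kronecker, zero_mul]
  have h4 : (P ⊗ₖ Q) * ((Ωl ⊗ₖ Ωl) * (P ⊗ₖ Q)) = P ⊗ₖ (Q * Ωl * Q) := by
    rw [hkron, hkron, hPΩP, ← mul_assoc Q]
  simp only [Matrix.smul_mul, Matrix.mul_smul, smul_smul, mul_add, add_mul, mul_one,
    one_mul, mul_assoc]
  rw [h1, h2, h3, h4]
  simp only [add_zero, zero_add, smul_add]
  rw [← add_smul, smul_smul, mul_assoc Q]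
  norm_num

end


/-- For a single-copy strategy `Ω_l` (Hermitian, `0 ≤ Ω_l ≤ I`,
`Ω_l|ψ⟩ = |ψ⟩`) and the tensor product strategy `Ω = Ω_l ⊗ Ω_l`, with
`P_ψ = |ψ⟩⟨ψ| ⊗ (I - |ψ⟩⟨ψ|)` and `P_s = (F + I)/2` (F the swap), the operator
`Ω_⋆ = 2 P_ψ P_s Ω P_s P_ψ` equals `|ψ⟩⟨ψ| ⊗ [(I-|ψ⟩⟨ψ|) Ω_l (I-|ψ⟩⟨ψ|)]`, and
hence the largest eigenvalue of `Ω_⋆` equals the largest eigenvalue of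
`(I-|ψ⟩⟨ψ|) Ω_l (I-|ψ⟩⟨ψ|)`. -/
theorem tensor_strategy_projected_operator {m : ℕ}
    (ψ : Fin m → ℂ) (hψ : star ψ ⬝ᵥ ψ = 1)
    (Ωl : Matrix (Fin m) (Fin m) ℂ)
    (hherm : Ωl.IsHermitian) (hpos : Ωl.PosSemidef) (hle : (1 - Ωl).PosSemidef)
    (hfix : Ωl *ᵥ ψ = ψ)
    (F : Matrix (Fin m × Fin m) (Fin m × Fin m) ℂ)
    (hF : ∀ x y : Fin m → ℂ,
      F *ᵥ (fun p => x p.1 * y p.2) = fun p => y p.1 * x p.2) :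
    (2 : ℂ) • ((vecMulVec ψ (star ψ) ⊗ₖ (1 - vecMulVec ψ (star ψ))) *
        ((2⁻¹ : ℂ) • (F + 1)) * (Ωl ⊗ₖ Ωl) * ((2⁻¹ : ℂ) • (F + 1)) *
        (vecMulVec ψ (star ψ) ⊗ₖ (1 - vecMulVec ψ (star ψ))))
      = vecMulVec ψ (star ψ) ⊗ₖ
          ((1 - vecMulVec ψ (star ψ)) * Ωl * (1 - vecMulVec ψ (star ψ))) ∧
    sSup {r : ℝ | (r : ℂ) ∈ spectrum ℂ
        ((2 : ℂ) • ((vecMulVec ψ (star ψ) ⊗ₖ (1 - vecMulVec ψ (star ψ))) *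
          ((2⁻¹ : ℂ) • (F + 1)) * (Ωl ⊗ₖ Ωl) * ((2⁻¹ : ℂ) • (F + 1)) *
          (vecMulVec ψ (star ψ) ⊗ₖ (1 - vecMulVec ψ (star ψ)))))}
      = sSup {r : ℝ | (r : ℂ) ∈ spectrum ℂ
          ((1 - vecMulVec ψ (star ψ)) * Ωl * (1 - vecMulVec ψ (star ψ)))} := by
  have h1 := main_eq F hF ψ hψ Ωl hherm hfix
  refine ⟨h1, ?_⟩
  rw [h1]
  have hPψ : vecMulVec ψ (star ψ) *ᵥ ψ = ψ := by
    funext i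
    have : (vecMulVec ψ (star ψ) *ᵥ ψ) i = ψ i * (star ψ ⬝ᵥ ψ) := by
      simp only [Matrix.mulVec, dotProduct, vecMulVec_apply, Finset.mul_sum]
      exact Finset.sum_congr rfl fun k _ => by ring
    rw [this, hψ, mul_one]
  have hQψ : (1 - vecMulVec ψ (star ψ)) *ᵥ ψ = 0 := by
    rw [Matrix.sub_mulVec, Matrix.one_mulVec, hPψ, sub_self]
  have hMψ : ((1 - vecMulVec ψ (star ψ)) * Ωl * (1 - vecMulVec ψ (star ψ))) *ᵥ ψ = 0 := by
    rw [← Matrix.mulVec_mulVec, hQψ, Matrix.mulVec_zero]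
  rw [spec_kron ψ hψ _ hMψ]
end

section
/- Let Ω be Hermitian with 0 ≤ Ω ≤ I on H^{⊗k} and λ₂(Ω) < 1 its second largest eigenvalue, where Ω|Ψ⟩ = |Ψ⟩ for |Ψ⟩ = |ψ⟩^{⊗k}. If σ⁽¹⁾,...,σ⁽ᵏ⁾ are density operators each with ⟨ψ|σ⁽ʳ⁾|ψ⟩ ≤ 1−ε, then the product state ξ = σ⁽¹⁾⊗···⊗σ⁽ᵏ⁾ satisfies ⟨Ψ|ξ|Ψ⟩ ≤ (1−ε)^k, and consequently tr[Ωξ] ≤ 1 − (1−λ₂(Ω))(1−(1−ε)^k). -/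
/-!
The overlap of a product state with a product vector factorises:
`⟨Ψ|σ⁽¹⁾ ⊗ ⋯ ⊗ σ⁽ᵏ⁾|Ψ⟩ = ∏ᵣ ⟨ψ|σ⁽ʳ⁾|ψ⟩`, and each factor is a nonnegative real at most `1 - ε`.
For the trace bound, writing `v = ⟨Ψ|v⟩ Ψ + w` with `w ⊥ Ψ` and using `ΩΨ = Ψ` shows
`Ω ≤ λ₂ • 1 + (1 - λ₂) • |Ψ⟩⟨Ψ|` in the Loewner order. Pairing this with the (positive, unit-trace)
state `ξ` gives `tr[Ωξ] ≤ λ₂ + (1 - λ₂) ⟨Ψ|ξ|Ψ⟩`, which is monotone in the overlap since `λ₂ ≤ 1`.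
-/

open Matrix
open scoped ComplexOrder

namespace Matrix

section PiKronecker

variable {ι R : Type*} [Fintype ι] {l m n : ι → Type*}

def piKronecker [CommMonoid R] (A : ∀ i, Matrix (m i) (n i) R) :
    Matrix (∀ i, m i) (∀ i, n i) R :=
  of fun f g => ∏ i, A i (f i) (g i)

def piKroneckerVec [CommMonoid R] (x : ∀ i, n i → R) : (∀ i, n i) → R :=
  fun f => ∏ i, x i (f i)

section CommSemiring

variable [CommSemiring R] [DecidableEq ι] [∀ i, Fintype (n i)]

theorem piKroneckerVec_dotProduct (x y : ∀ i, n i → R) :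
    piKroneckerVec x ⬝ᵥ piKroneckerVec y = ∏ i, x i ⬝ᵥ y i := by
  simp only [dotProduct, piKroneckerVec, ← Finset.prod_mul_distrib]
  exact (Fintype.prod_sum fun i a => x i a * y i a).symm

theorem piKronecker_mulVec (A : ∀ i, Matrix (m i) (n i) R) (x : ∀ i, n i → R) :
    piKronecker A *ᵥ piKroneckerVec x = piKroneckerVec fun i => A i *ᵥ x i := by
  funext f
  simp only [mulVec, dotProduct, piKronecker, piKroneckerVec, of_apply, ← Finset.prod_mul_distrib]
  exact (Fintype.prod_sum fun i b => A i (f i) b * x i b).symm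

theorem piKronecker_mul (A : ∀ i, Matrix (l i) (n i) R) (B : ∀ i, Matrix (n i) (m i) R) :
    piKronecker A * piKronecker B = piKronecker fun i => A i * B i := by
  ext f g
  simp only [mul_apply, piKronecker, of_apply, ← Finset.prod_mul_distrib]
  exact (Fintype.prod_sum fun i c => A i (f i) c * B i c (g i)).symm

theorem trace_piKronecker (A : ∀ i, Matrix (n i) (n i) R) :
    (piKronecker A).trace = ∏ i, (A i).trace := by
  simp only [trace, diag, piKronecker, of_apply]
  exact (Fintype.prod_sum fun i a => A i a a).symm

end CommSemiring

section StarRing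

variable [CommSemiring R] [StarRing R]

theorem star_piKroneckerVec (x : ∀ i, n i → R) :
    star (piKroneckerVec x) = piKroneckerVec fun i => star (x i) := by
  funext f
  simp [piKroneckerVec, star_prod]

theorem conjTranspose_piKronecker (A : ∀ i, Matrix (m i) (n i) R) :
    (piKronecker A)ᴴ = piKronecker fun i => (A i)ᴴ := by
  ext f g
  simp [piKronecker, star_prod]

end StarRing

open scoped MatrixOrder in
theorem PosSemidef.piKronecker {𝕜 : Type*} [RCLike 𝕜] [DecidableEq ι] [∀ i, Fintype (n i)]
    [∀ i, DecidableEq (n i)] {A : ∀ i, Matrix (n i) (n i) 𝕜} (hA : ∀ i, (A i).PosSemidef) :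
    (piKronecker A).PosSemidef := by
  choose B hB using fun i => CStarAlgebra.nonneg_iff_eq_star_mul_self.mp (hA i).nonneg
  have hAB : A = fun i => (B i)ᴴ * B i := funext hB
  rw [hAB, ← piKronecker_mul, ← conjTranspose_piKronecker]
  exact posSemidef_conjTranspose_mul_self _

end PiKronecker

section RCLike

variable {n 𝕜 : Type*} [Fintype n] [RCLike 𝕜]

open scoped MatrixOrder in
theorem PosSemidef.trace_mul_nonneg [DecidableEq n] {A B : Matrix n n 𝕜} (hA : A.PosSemidef)
    (hB : B.PosSemidef) : 0 ≤ (A * B).trace := by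
  obtain ⟨C, rfl⟩ := CStarAlgebra.nonneg_iff_eq_star_mul_self.mp hB.nonneg
  rw [← mul_assoc, trace_mul_cycle]
  exact (hA.mul_mul_conjTranspose_same C).trace_nonneg

theorem trace_vecMulVec_star_mul (ψ : n → 𝕜) (ξ : Matrix n n 𝕜) :
    (vecMulVec ψ (star ψ) * ξ).trace = star ψ ⬝ᵥ ξ *ᵥ ψ := by
  rw [trace_mul_comm, mul_vecMulVec, trace_vecMulVec, dotProduct_comm]

end RCLike

section CommRing

variable {n R : Type*} [Fintype n] [CommRing R] [StarRing R]

theorem star_smul_dotProduct_mulVec_smul (A : Matrix n n R) (c : R) (w : n → R) :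
    star (c • w) ⬝ᵥ A *ᵥ (c • w) = star c * c * (star w ⬝ᵥ A *ᵥ w) := by
  rw [star_smul, mulVec_smul, smul_dotProduct, dotProduct_smul, smul_eq_mul, smul_eq_mul]
  ring

theorem star_add_dotProduct_mulVec_add_of_orthogonal {A : Matrix n n R} (hA : A.IsHermitian)
    {ψ w : n → R} (hψ : star ψ ⬝ᵥ ψ = 1) (hfix : A *ᵥ ψ = ψ) (hw : star ψ ⬝ᵥ w = 0) (c : R) :
    star (c • ψ + w) ⬝ᵥ A *ᵥ (c • ψ + w) = star c * c + star w ⬝ᵥ A *ᵥ w := by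
  have hAw : star ψ ⬝ᵥ A *ᵥ w = 0 := by
    rw [dotProduct_mulVec, ← hA.eq, ← star_mulVec, hfix, hw]
  have hwψ : star w ⬝ᵥ ψ = 0 := by rw [star_dotProduct, hw, star_zero]
  simp only [star_add, star_smul, mulVec_add, mulVec_smul, hfix, add_dotProduct, dotProduct_add,
    smul_dotProduct, dotProduct_smul, hψ, hAw, hwψ, smul_eq_mul]
  ring

end CommRing

end Matrix

theorem Complex.re_prod_le_pow_card {ι : Type*} [Fintype ι] {z : ι → ℂ} {c : ℝ}
    (h0 : ∀ i, 0 ≤ z i) (hc : ∀ i, (z i).re ≤ c) : (∏ i, z i).re ≤ c ^ Fintype.card ι := by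
  have hle : ∏ i, z i ≤ ∏ _i : ι, (c : ℂ) :=
    Finset.prod_le_prod (fun i _ => h0 i)
      fun i _ => Complex.le_def.mpr ⟨hc i, by simpa using (Complex.nonneg_iff.mp (h0 i)).2.symm⟩
  have hre := (Complex.le_def.mp hle).1
  rwa [Finset.prod_const, Finset.card_univ, ← Complex.ofReal_pow, Complex.ofReal_re] at hre

variable {n : Type*} [Fintype n] {Ω : Matrix n n ℂ} {ψ : n → ℂ} {l : ℝ}

theorem re_dotProduct_mulVec_le_of_orthogonal
    (hl : ∀ v, star v ⬝ᵥ v = 1 → star ψ ⬝ᵥ v = 0 → (star v ⬝ᵥ Ω *ᵥ v).re ≤ l)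
    {w : n → ℂ} (hw : star ψ ⬝ᵥ w = 0) :
    (star w ⬝ᵥ Ω *ᵥ w).re ≤ l * (star w ⬝ᵥ w).re := by
  rcases eq_or_ne w 0 with rfl | hw0
  · simp
  obtain ⟨hN, hNim⟩ := Complex.pos_iff.mp (dotProduct_star_self_pos_iff.mpr hw0)
  set N := (star w ⬝ᵥ w).re
  set t := (Real.sqrt N)⁻¹
  have ht : star (t : ℂ) * t = (N⁻¹ : ℝ) := by
    rw [Complex.star_def, Complex.conj_ofReal, ← Complex.ofReal_mul, ← mul_inv,
      Real.mul_self_sqrt hN.le]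
  have hz : star w ⬝ᵥ w = N := Complex.ext rfl (by simp [hNim])
  have hunit : star ((t : ℂ) • w) ⬝ᵥ ((t : ℂ) • w) = 1 := by
    rw [star_smul, smul_dotProduct, dotProduct_smul, smul_eq_mul, smul_eq_mul, ← mul_assoc, ht, hz,
      ← Complex.ofReal_mul, inv_mul_cancel₀ hN.ne', Complex.ofReal_one]
  have hbound := hl _ hunit (by rw [dotProduct_smul, hw, smul_zero])
  rw [star_smul_dotProduct_mulVec_smul, ht, Complex.re_ofReal_mul, inv_mul_le_iff₀ hN] at hbound
  linarith

theorem posSemidef_smul_one_add_smul_vecMulVec_sub [DecidableEq n] (hΩ : Ω.IsHermitian)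
    (hψ : star ψ ⬝ᵥ ψ = 1) (hfix : Ω *ᵥ ψ = ψ)
    (hl : ∀ v, star v ⬝ᵥ v = 1 → star ψ ⬝ᵥ v = 0 → (star v ⬝ᵥ Ω *ᵥ v).re ≤ l) :
    (l • 1 + (1 - l) • vecMulVec ψ (star ψ) - Ω).PosSemidef := by
  have hM : (l • 1 + (1 - l) • vecMulVec ψ (star ψ) - Ω).IsHermitian :=
    ((isHermitian_one.smul (IsSelfAdjoint.all l)).add
      ((posSemidef_vecMulVec_self_star ψ).isHermitian.smul (IsSelfAdjoint.all _))).sub hΩ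
  refine .of_dotProduct_mulVec_nonneg hM fun v => Complex.nonneg_iff.mpr
    ⟨?_, (hM.im_star_dotProduct_mulVec_self v).symm⟩
  set c := star ψ ⬝ᵥ v
  set w := v - c • ψ
  have hw : star ψ ⬝ᵥ w = 0 := by
    rw [dotProduct_sub, dotProduct_smul, hψ, smul_eq_mul, mul_one, sub_self]
  have hv : v = c • ψ + w := (add_sub_cancel _ _).symm
  have hP : star v ⬝ᵥ vecMulVec ψ (star ψ) *ᵥ v = star c * c := by
    rw [vecMulVec_mulVec, op_smul_eq_smul, dotProduct_smul, star_dotProduct v ψ, smul_eq_mul,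
      mul_comm]
  have h1 := star_add_dotProduct_mulVec_add_of_orthogonal isHermitian_one hψ (one_mulVec ψ) hw c
  rw [one_mulVec, one_mulVec, ← hv] at h1
  have hΩv := star_add_dotProduct_mulVec_add_of_orthogonal hΩ hψ hfix hw c
  rw [← hv] at hΩv
  have hwΩw := re_dotProduct_mulVec_le_of_orthogonal hl hw
  simp only [sub_mulVec, add_mulVec, smul_mulVec, one_mulVec, dotProduct_sub,
    dotProduct_add, dotProduct_smul, Complex.sub_re, Complex.add_re, Complex.real_smul, hP, h1, hΩv,
    Complex.re_ofReal_mul]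
  linarith

theorem re_trace_mul_le_of_mulVec_eq_self [DecidableEq n] (hΩ : Ω.IsHermitian)
    (hψ : star ψ ⬝ᵥ ψ = 1) (hfix : Ω *ᵥ ψ = ψ)
    (hl : ∀ v, star v ⬝ᵥ v = 1 → star ψ ⬝ᵥ v = 0 → (star v ⬝ᵥ Ω *ᵥ v).re ≤ l)
    {ξ : Matrix n n ℂ} (hξ : ξ.PosSemidef) (htr : ξ.trace = 1) :
    (Ω * ξ).trace.re ≤ l + (1 - l) * (star ψ ⬝ᵥ ξ *ᵥ ψ).re := by
  have h := (Complex.nonneg_iff.mp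
    ((posSemidef_smul_one_add_smul_vecMulVec_sub hΩ hψ hfix hl).trace_mul_nonneg hξ)).1
  rw [sub_mul, add_mul, smul_mul_assoc, smul_mul_assoc, one_mul, trace_sub, trace_add,
    trace_smul, trace_smul, htr, trace_vecMulVec_star_mul] at h
  simp only [Complex.sub_re, Complex.add_re, Complex.real_smul, Complex.re_ofReal_mul,
    Complex.one_re] at h
  linarith

theorem product_fake_state_bounds_general {m k : ℕ}
    (ψ : Fin m → ℂ) (hψ : star ψ ⬝ᵥ ψ = 1)
    (ε : ℝ)
    (σ : Fin k → Matrix (Fin m) (Fin m) ℂ)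
    (hσ : ∀ r, (σ r).PosSemidef ∧ (σ r).trace = 1 ∧
      (star ψ ⬝ᵥ (σ r) *ᵥ ψ).re ≤ 1 - ε)
    (Ψ : (Fin k → Fin m) → ℂ) (hΨ : Ψ = fun f => ∏ r, ψ (f r))
    (Ω : Matrix (Fin k → Fin m) (Fin k → Fin m) ℂ)
    (hherm : Ω.IsHermitian)
    (hfix : Ω *ᵥ Ψ = Ψ)
    (l : ℝ)
    (hl : IsGreatest {x : ℝ | ∃ v : (Fin k → Fin m) → ℂ,
        star v ⬝ᵥ v = 1 ∧ star Ψ ⬝ᵥ v = 0 ∧ x = (star v ⬝ᵥ Ω *ᵥ v).re} l)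
    (hl1 : l < 1)
    (ξ : Matrix (Fin k → Fin m) (Fin k → Fin m) ℂ)
    (hξ : ξ = Matrix.of fun f g => ∏ r, σ r (f r) (g r)) :
    (star Ψ ⬝ᵥ ξ *ᵥ Ψ).re ≤ (1 - ε) ^ k ∧
    (Matrix.trace (Ω * ξ)).re ≤ 1 - (1 - l) * (1 - (1 - ε) ^ k) := by
  replace hΨ : Ψ = piKroneckerVec fun _ => ψ := hΨ
  replace hξ : ξ = piKronecker σ := hξ
  have hoverlap : (star Ψ ⬝ᵥ ξ *ᵥ Ψ).re ≤ (1 - ε) ^ k := by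
    rw [hΨ, hξ, star_piKroneckerVec, piKronecker_mulVec, piKroneckerVec_dotProduct]
    simpa using Complex.re_prod_le_pow_card (fun r => (hσ r).1.dotProduct_mulVec_nonneg ψ)
      fun r => (hσ r).2.2
  have hunit : star Ψ ⬝ᵥ Ψ = 1 := by
    rw [hΨ, star_piKroneckerVec, piKroneckerVec_dotProduct, hψ, Finset.prod_const_one]
  have htr : ξ.trace = 1 := by
    rw [hξ, trace_piKronecker]
    exact Finset.prod_eq_one fun r _ => (hσ r).2.1
  have hsingle := re_trace_mul_le_of_mulVec_eq_self hherm hunit hfix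
    (fun v hv hvΨ => hl.2 ⟨v, hv, hvΨ, rfl⟩) (hξ ▸ PosSemidef.piKronecker fun r => (hσ r).1) htr
  have hmono := mul_le_mul_of_nonneg_left hoverlap (sub_nonneg.mpr hl1.le)
  exact ⟨hoverlap, by linarith⟩

/-- Let `Ω` be Hermitian with `0 ≤ Ω ≤ I` on `H^{⊗k}`, fixing
`|Ψ⟩ = |ψ⟩^{⊗k}`, and let `l = λ₂(Ω) < 1` be its second largest eigenvalue
(the largest value of `⟨v|Ω|v⟩` over unit vectors orthogonal to `Ψ`). If
`σ⁽¹⁾, …, σ⁽ᵏ⁾` are density operators with `⟨ψ|σ⁽ʳ⁾|ψ⟩ ≤ 1−ε`, then the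
product state `ξ = σ⁽¹⁾ ⊗ ⋯ ⊗ σ⁽ᵏ⁾` satisfies `⟨Ψ|ξ|Ψ⟩ ≤ (1−ε)^k` and
consequently `tr[Ωξ] ≤ 1 − (1−λ₂(Ω))(1−(1−ε)^k)`. -/
theorem product_fake_state_bounds {m k : ℕ} (hk : 1 ≤ k)
    (ψ : Fin m → ℂ) (hψ : star ψ ⬝ᵥ ψ = 1)
    (ε : ℝ) (hε0 : 0 ≤ ε) (hε1 : ε ≤ 1)
    (σ : Fin k → Matrix (Fin m) (Fin m) ℂ)
    (hσ : ∀ r, (σ r).PosSemidef ∧ (σ r).trace = 1 ∧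
      (star ψ ⬝ᵥ (σ r) *ᵥ ψ).re ≤ 1 - ε)
    (Ψ : (Fin k → Fin m) → ℂ) (hΨ : Ψ = fun f => ∏ r, ψ (f r))
    (Ω : Matrix (Fin k → Fin m) (Fin k → Fin m) ℂ)
    (hherm : Ω.IsHermitian) (hpos : Ω.PosSemidef) (hle : (1 - Ω).PosSemidef)
    (hfix : Ω *ᵥ Ψ = Ψ)
    (l : ℝ)
    (hl : IsGreatest {x : ℝ | ∃ v : (Fin k → Fin m) → ℂ,
        star v ⬝ᵥ v = 1 ∧ star Ψ ⬝ᵥ v = 0 ∧ x = (star v ⬝ᵥ Ω *ᵥ v).re} l)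
    (hl1 : l < 1)
    (ξ : Matrix (Fin k → Fin m) (Fin k → Fin m) ℂ)
    (hξ : ξ = Matrix.of fun f g => ∏ r, σ r (f r) (g r)) :
    (star Ψ ⬝ᵥ ξ *ᵥ Ψ).re ≤ (1 - ε) ^ k ∧
    (Matrix.trace (Ω * ξ)).re ≤ 1 - (1 - l) * (1 - (1 - ε) ^ k) :=
  product_fake_state_bounds_general ψ hψ ε σ hσ Ψ hΨ Ω hherm hfix l hl hl1 ξ hξ
end
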